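/- arXiv:1912.06366 — 3 statements merged into one kernel-verified Lean document; each statement's English description precedes it below -/
import Mathlib

section
/- For the stepsize sequence α_t = (H+1)/(H+t) with weights α_t^i = α_i ∏_{j=i+1}^t (1-α_j), for every t ≥ 1 it holds that 1/√t ≤ ∑_{i=1}^t α_t^i/√i ≤ 2/√t. -/
open Finset

noncomputable def stepAlpha (H t : ℕ) : ℝ := (H + 1) / (H + t)

noncomputable def stepWeight (H t i : ℕ) : ℝ :=
  stepAlpha H i * ∏ j ∈ Finset.Ioc i t, (1 - stepAlpha H j)

lemma stepAlpha_nonneg (H t : ℕ) : 0 ≤ stepAlpha H t := by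
  unfold stepAlpha; positivity

lemma stepAlpha_le_one (H t : ℕ) (ht : 1 ≤ t) : stepAlpha H t ≤ 1 := by
  unfold stepAlpha
  rw [div_le_one (by positivity)]
  have : (1 : ℝ) ≤ t := by exact_mod_cast ht
  linarith

lemma stepWeight_nonneg (H t i : ℕ) (hi : 1 ≤ i) : 0 ≤ stepWeight H t i := by
  unfold stepWeight
  apply mul_nonneg (stepAlpha_nonneg H i)
  apply Finset.prod_nonneg
  intro j hj
  have hj1 : 1 ≤ j := le_trans hi (le_of_lt (Finset.mem_Ioc.mp hj).1)
  linarith [stepAlpha_le_one H j hj1]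

lemma stepWeight_succ (H t i : ℕ) (hi : i ≤ t) :
    stepWeight H (t + 1) i = stepWeight H t i * (1 - stepAlpha H (t + 1)) := by
  unfold stepWeight
  rw [Finset.prod_Ioc_succ_top hi, mul_assoc]

lemma stepWeight_self (H t : ℕ) : stepWeight H t t = stepAlpha H t := by
  unfold stepWeight
  simp

lemma sum_stepWeight (H t : ℕ) (ht : 1 ≤ t) :
    ∑ i ∈ Finset.Icc 1 t, stepWeight H t i = 1 := by
  induction t with
  | zero => omega
  | succ t ih =>
    rcases Nat.eq_or_lt_of_le ht with h | h
    · rw [← h]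
      simp only [Finset.Icc_self, Finset.sum_singleton, stepWeight_self]
      unfold stepAlpha
      rw [Nat.cast_one, div_self (by positivity)]
    · have ht1 : 1 ≤ t := by omega
      rw [show t + 1 = t + 1 from rfl, Finset.sum_Icc_succ_top (by omega),
        stepWeight_self]
      have : ∀ i ∈ Finset.Icc 1 t, stepWeight H (t+1) i
          = stepWeight H t i * (1 - stepAlpha H (t+1)) := by
        intro i hi
        exact stepWeight_succ H t i (Finset.mem_Icc.mp hi).2
      rw [Finset.sum_congr rfl this, ← Finset.sum_mul, ih ht1]
      ring

theorem stepWeight_sqrt_bounds (H t : ℕ) (hH : 0 < H) (ht : 1 ≤ t) :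
    1 / Real.sqrt t ≤ ∑ i ∈ Finset.Icc 1 t, stepWeight H t i / Real.sqrt i ∧
    ∑ i ∈ Finset.Icc 1 t, stepWeight H t i / Real.sqrt i ≤ 2 / Real.sqrt t := by
  constructor
  · -- lower bound
    have h1 : (1:ℝ) / Real.sqrt t = ∑ i ∈ Finset.Icc 1 t, stepWeight H t i / Real.sqrt t := by
      rw [← Finset.sum_div, sum_stepWeight H t ht]
    rw [h1]
    apply Finset.sum_le_sum
    intro i hi
    obtain ⟨hi1, hit⟩ := Finset.mem_Icc.mp hi
    have hipos : (0:ℝ) < Real.sqrt i := Real.sqrt_pos.mpr (by exact_mod_cast hi1)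
    have hle : Real.sqrt i ≤ Real.sqrt t := Real.sqrt_le_sqrt (by exact_mod_cast hit)
    exact div_le_div_of_nonneg_left (stepWeight_nonneg H t i hi1) hipos hle
  · -- upper bound, by induction
    induction t with
    | zero => omega
    | succ t ih =>
      rcases Nat.eq_or_lt_of_le ht with h | h
      · have : t = 0 := by omega
        subst this
        simp only [zero_add, Finset.Icc_self, Finset.sum_singleton, stepWeight_self]
        unfold stepAlpha
        rw [Nat.cast_one, div_self (by positivity)]
        norm_num [Real.sqrt_one]
      · have ht1 : 1 ≤ t := by omega
        have key : ∑ i ∈ Finset.Icc 1 (t+1), stepWeight H (t+1) i / Real.sqrt i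
            = stepAlpha H (t+1) / Real.sqrt (t+1)
              + (1 - stepAlpha H (t+1)) * ∑ i ∈ Finset.Icc 1 t, stepWeight H t i / Real.sqrt i := by
          rw [Finset.sum_Icc_succ_top (by omega), stepWeight_self]
          have hc : ∀ i ∈ Finset.Icc 1 t, stepWeight H (t+1) i / Real.sqrt i
              = (1 - stepAlpha H (t+1)) * (stepWeight H t i / Real.sqrt i) := by
            intro i hi
            rw [stepWeight_succ H t i (Finset.mem_Icc.mp hi).2]
            ring
          rw [Finset.sum_congr rfl hc, ← Finset.mul_sum]
          push_cast
          ring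
        rw [key]
        have IH := ih ht1
        set a := stepAlpha H (t+1) with ha
        have hspos : (0:ℝ) < Real.sqrt t := Real.sqrt_pos.mpr (by exact_mod_cast ht1)
        have hupos : (0:ℝ) < Real.sqrt ((t:ℝ)+1) := Real.sqrt_pos.mpr (by positivity)
        have ha0 : 0 ≤ a := stepAlpha_nonneg H (t+1)
        have ha1 : a ≤ 1 := stepAlpha_le_one H (t+1) (by omega)
        have step1 : (1 - a) * ∑ i ∈ Finset.Icc 1 t, stepWeight H t i / Real.sqrt i
            ≤ (1 - a) * (2 / Real.sqrt t) := by
          apply mul_le_mul_of_nonneg_left IH (by linarith)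
        have step2 : (1 - a) * (2 / Real.sqrt t) ≤ (2 - a) / Real.sqrt ((t:ℝ)+1) := by
          rw [mul_div_assoc', div_le_div_iff₀ hspos hupos]
          have h1a : 1 - a = (t:ℝ) / ((H:ℝ) + (t+1)) := by
            rw [ha]; unfold stepAlpha; push_cast
            field_simp
            ring
          have h2a : 2 - a = ((H:ℝ) + 2*t + 1) / ((H:ℝ) + (t+1)) := by
            rw [ha]; unfold stepAlpha; push_cast
            field_simp
            ring
          rw [h1a, h2a]
          have hden : (0:ℝ) < (H:ℝ) + (t+1) := by positivity
          rw [div_mul_eq_mul_div, div_mul_eq_mul_div, div_mul_eq_mul_div,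
            div_le_div_iff₀ hden hden]
          have hts : (t:ℝ) = Real.sqrt t * Real.sqrt t := by
            rw [Real.mul_self_sqrt (by positivity)]
          have hkey : 2 * (Real.sqrt t * Real.sqrt ((t:ℝ)+1)) ≤ 2*t + 1 := by
            have : Real.sqrt t * Real.sqrt ((t:ℝ)+1) = Real.sqrt ((t:ℝ)*(t+1)) := by
              rw [← Real.sqrt_mul (by positivity)]
            rw [this]
            nlinarith [Real.sq_sqrt (show (0:ℝ) ≤ (t:ℝ)*(t+1) by positivity),
              Real.sqrt_nonneg ((t:ℝ)*(t+1))]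
          have hH0 : (0:ℝ) ≤ (H:ℝ) := by positivity
          have h := mul_le_mul_of_nonneg_left hkey (mul_nonneg hspos.le hden.le)
          nlinarith [hts, h, hH0, mul_nonneg hH0 (mul_nonneg hspos.le hden.le),
            mul_pos hspos hden, mul_pos hupos hden]
        have step3 : a / Real.sqrt ((t:ℝ)+1) + (2 - a) / Real.sqrt ((t:ℝ)+1)
            = 2 / Real.sqrt ((t:ℝ)+1) := by
          rw [← add_div]; ring_nf
        have hcast : Real.sqrt ((t+1 : ℕ) : ℝ) = Real.sqrt ((t:ℝ)+1) := by push_cast; ring_nf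
        rw [hcast]
        linarith
end

section
/- For the stepsize sequence α_t = (H+1)/(H+t) with weights α_t^i = α_i ∏_{j=i+1}^t (1-α_j), for every t ≥ 1 it holds that max_{1 ≤ i ≤ t} α_t^i ≤ 2H/t. -/
open Finset

lemma stepAlpha_pos (H t : ℕ) (ht : 1 ≤ t) : 0 < stepAlpha H t := by
  unfold stepAlpha
  apply div_pos <;> [positivity; skip]
  have : (1:ℝ) ≤ t := by exact_mod_cast ht
  positivity

lemma one_sub_stepAlpha_nonneg (H j : ℕ) (hj : 1 ≤ j) : 0 ≤ 1 - stepAlpha H j := by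
  unfold stepAlpha
  have h1 : (1:ℝ) ≤ j := by exact_mod_cast hj
  have hd : (0:ℝ) < H + j := by positivity
  rw [sub_nonneg, div_le_one hd]
  linarith

lemma stepWeight_le_alpha (H : ℕ) : ∀ d t i : ℕ, i + d = t → 1 ≤ i →
    stepWeight H t i ≤ stepAlpha H t := by
  intro d
  induction d with
  | zero =>
    intro t i hit hi
    subst hit
    simp [stepWeight]
  | succ d ih =>
    intro t i hit hi
    have hlt : i < t := by omega
    have hsplit : Finset.Ioc i t = insert (i+1) (Finset.Ioc (i+1) t) := by
      ext x
      simp only [Finset.mem_Ioc, Finset.mem_insert]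
      omega
    have hprod : 0 ≤ ∏ j ∈ Finset.Ioc (i+1) t, (1 - stepAlpha H j) := by
      apply Finset.prod_nonneg
      intro j hj
      exact one_sub_stepAlpha_nonneg H j (by simp at hj; omega)
    have key : stepAlpha H i * (1 - stepAlpha H (i+1)) ≤ stepAlpha H (i+1) := by
      unfold stepAlpha
      have h1 : (1:ℝ) ≤ i := by exact_mod_cast hi
      push_cast
      have hd1 : (0:ℝ) < (H:ℝ) + i := by positivity
      have hd2 : (0:ℝ) < (H:ℝ) + i + 1 := by positivity
      have hrw : 1 - ((H:ℝ)+1)/((H:ℝ)+i+1) = i/((H:ℝ)+i+1) := by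
        field_simp
        ring
      rw [show (H:ℝ) + ((i:ℝ) + 1) = (H:ℝ) + i + 1 from by ring, hrw, div_mul_div_comm, div_le_div_iff₀ (by positivity) hd2]
      have hH0 : (0:ℝ) ≤ H := Nat.cast_nonneg H
      nlinarith [mul_nonneg (mul_nonneg (by linarith : (0:ℝ) ≤ (H:ℝ)+1) hd2.le) hH0]
    calc stepWeight H t i
        = stepAlpha H i * (1 - stepAlpha H (i+1)) *
          ∏ j ∈ Finset.Ioc (i+1) t, (1 - stepAlpha H j) := by
          rw [stepWeight, hsplit, Finset.prod_insert (by simp), mul_assoc]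
      _ ≤ stepAlpha H (i+1) * ∏ j ∈ Finset.Ioc (i+1) t, (1 - stepAlpha H j) :=
          mul_le_mul_of_nonneg_right key hprod
      _ = stepWeight H t (i+1) := rfl
      _ ≤ stepAlpha H t := ih t (i+1) (by omega) (by omega)

theorem stepWeight_max_le (H t : ℕ) (hH : 0 < H) (ht : 1 ≤ t) :
    ∀ i ∈ Finset.Icc 1 t, stepWeight H t i ≤ 2 * H / t := by
  intro i hi
  simp only [Finset.mem_Icc] at hi
  have h1 := stepWeight_le_alpha H (t - i) t i (by omega) hi.1
  refine h1.trans ?_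
  unfold stepAlpha
  have ht1 : (1:ℝ) ≤ t := by exact_mod_cast ht
  have hH1 : (1:ℝ) ≤ H := by exact_mod_cast hH
  rw [div_le_div_iff₀ (by positivity) (by positivity)]
  nlinarith
end

section
/- For the stepsize sequence α_t = (H+1)/(H+t) with weights α_t^i = α_i ∏_{j=i+1}^t (1-α_j), for every fixed i ≥ 1 the infinite series ∑_{t=i}^∞ α_t^i converges and equals 1 + 1/H. -/
open Finset

theorem stepWeight_tsum (H i : ℕ) (hH : 0 < H) (hi : 1 ≤ i) :
    HasSum (fun t : ℕ => if i ≤ t then stepWeight H t i else 0) (1 + 1 / H) := by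
  have hH1 : (1:ℝ) ≤ (H:ℝ) := by exact_mod_cast hH
  have hi1 : (1:ℝ) ≤ (i:ℝ) := by exact_mod_cast hi
  have hHpos : (0:ℝ) < H := by linarith
  have hHi0 : (H:ℝ) + i ≠ 0 := by positivity
  have hH0 : (H:ℝ) ≠ 0 := by positivity
  set P : ℕ → ℝ := fun n => ∏ j ∈ Finset.Ioc i n, (1 - stepAlpha H j) with hP
  have hfac : ∀ j : ℕ, 1 ≤ j → 1 - stepAlpha H j = ((j:ℝ) - 1) / (H + j) := by
    intro j hj
    have hj1 : (1:ℝ) ≤ (j:ℝ) := by exact_mod_cast hj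
    have hne : (H:ℝ) + j ≠ 0 := ne_of_gt (by linarith)
    rw [stepAlpha]
    field_simp
    ring
  have hPsucc : ∀ n : ℕ, i ≤ n → P (n+1) = P n * ((n:ℝ) / (H + n + 1)) := by
    intro n hn
    have h := Finset.prod_Ioc_succ_top hn (fun j => (1 - stepAlpha H j))
    simp only [hP]
    rw [h, hfac (n+1) (by omega)]
    push_cast
    ring
  have hPnonneg : ∀ n : ℕ, 0 ≤ P n := by
    intro n
    apply Finset.prod_nonneg
    intro j hj
    have hj1 : 1 ≤ j := le_trans hi (le_of_lt (Finset.mem_Ioc.mp hj).1)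
    rw [hfac j hj1]
    have hj1' : (1:ℝ) ≤ (j:ℝ) := by exact_mod_cast hj1
    apply div_nonneg (by linarith) (by linarith)
  have hPi : P i = 1 := by simp [hP]
  set c : ℝ := (H + 1) / (H * (H + i)) with hc
  have hcpos : 0 < c := by rw [hc]; positivity
  set g : ℕ → ℝ := fun n => c * (((n:ℝ) + H) * P n) with hg
  have htel : ∀ t : ℕ, i ≤ t → stepWeight H t i = g t - g (t+1) := by
    intro t ht
    have hPt : (∏ j ∈ Finset.Ioc i t, (1 - stepAlpha H j)) = P t := rfl
    have hteq : g (t+1) = c * (((t:ℝ) + 1 + H) * (P t * ((t:ℝ) / (H + t + 1)))) := by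
      simp only [hg, hPsucc t ht]
      push_cast
      ring
    rw [stepWeight, hPt, hteq, stepAlpha]
    simp only [hg, hc]
    have h2 : (H:ℝ) + t + 1 ≠ 0 := by positivity
    field_simp
    ring
  set f : ℕ → ℝ := fun t => if i ≤ t then stepWeight H t i else 0 with hf
  have hsum : ∀ n : ℕ, i ≤ n → ∑ t ∈ Finset.range n, f t = g i - g n := by
    intro n hn
    induction n with
    | zero => omega
    | succ m ih =>
      rcases Nat.lt_or_ge m i with hmi | hmi
      · have hm : m + 1 = i := by omega
        have hz : ∑ t ∈ Finset.range (m+1), f t = 0 := by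
          apply Finset.sum_eq_zero
          intro t htm
          have htlt : t < i := by simp at htm; omega
          simp [hf, Nat.not_le.mpr htlt]
        rw [hz, hm, sub_self]
      · rw [Finset.sum_range_succ, ih hmi]
        simp only [hf, if_pos hmi]
        rw [htel m hmi]
        ring
  have hgi : g i = 1 + 1 / H := by
    simp only [hg, hPi, hc]
    field_simp
    ring
  have hPbound : ∀ n : ℕ, i ≤ n → P n ≤ ((i:ℝ) * (i+1)) / ((n:ℝ) * ((n:ℝ)+1)) := by
    intro n hn
    induction n with
    | zero => omega
    | succ m ih =>
      rcases Nat.lt_or_ge m i with hmi | hmi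
      · have hm : m + 1 = i := by omega
        rw [hm, hPi, div_self (ne_of_gt (by nlinarith))]
      · have hstep := hPsucc m hmi
        have hm1 : (1:ℝ) ≤ (m:ℝ) := by exact_mod_cast le_trans hi hmi
        have hb : P (m+1) ≤ ((i:ℝ) * (i+1)) / ((m:ℝ) * ((m:ℝ)+1)) * ((m:ℝ) / ((m:ℝ)+2)) := by
          rw [hstep]
          apply mul_le_mul (ih hmi) _ (by positivity) (by positivity)
          apply div_le_div_of_nonneg_left (by linarith) (by linarith) (by linarith)
        push_cast
        calc P (m+1) ≤ ((i:ℝ) * (i+1)) / ((m:ℝ) * ((m:ℝ)+1)) * ((m:ℝ) / ((m:ℝ)+2)) := hb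
          _ = ((i:ℝ) * (i+1)) / (((m:ℝ)+1) * ((m:ℝ)+1+1)) := by
              have hm0 : (m:ℝ) ≠ 0 := by linarith
              have hm10 : (m:ℝ) + 1 ≠ 0 := by linarith
              have hm20 : (m:ℝ) + 2 ≠ 0 := by linarith
              field_simp
              ring
  have hgto : Filter.Tendsto g Filter.atTop (nhds 0) := by
    set K : ℝ := c * (1 + H) * ((i:ℝ) * ((i:ℝ)+1)) with hK
    apply squeeze_zero' (g := fun n : ℕ => K / ((n:ℝ) + 1))
    · filter_upwards with n
      simp only [hg]
      have := hPnonneg n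
      positivity
    · filter_upwards [Filter.eventually_atTop.mpr ⟨i, fun n hn => hn⟩] with n hn
      have hn1 : (1:ℝ) ≤ (n:ℝ) := by exact_mod_cast le_trans hi hn
      have hb := hPbound n hn
      simp only [hg, hK]
      have hipos : (0:ℝ) < (i:ℝ) * ((i:ℝ)+1) := by nlinarith
      have hA : (0:ℝ) < (n:ℝ) * ((n:ℝ)+1) := by nlinarith
      have hB : (0:ℝ) < (n:ℝ) + 1 := by linarith
      have h1 : ((n:ℝ) + H) * P n ≤ ((n:ℝ) + H) * (((i:ℝ) * ((i:ℝ)+1)) / ((n:ℝ) * ((n:ℝ)+1))) :=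
        mul_le_mul_of_nonneg_left hb (by linarith)
      have h2 : ((n:ℝ) + H) * (((i:ℝ) * ((i:ℝ)+1)) / ((n:ℝ) * ((n:ℝ)+1)))
          ≤ (1 + (H:ℝ)) * ((i:ℝ) * ((i:ℝ)+1)) / ((n:ℝ) + 1) := by
        rw [← mul_div_assoc, div_le_div_iff₀ hA hB]
        have hnH : (n:ℝ) + H ≤ (n:ℝ) * (1 + H) := by nlinarith
        nlinarith [mul_nonneg (mul_nonneg (sub_nonneg.2 hnH) hipos.le) hB.le]
      calc c * (((n:ℝ) + H) * P n)
          ≤ c * ((1 + (H:ℝ)) * ((i:ℝ) * ((i:ℝ)+1)) / ((n:ℝ) + 1)) :=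
            mul_le_mul_of_nonneg_left (le_trans h1 h2) hcpos.le
        _ = c * (1 + (H:ℝ)) * ((i:ℝ) * ((i:ℝ)+1)) / ((n:ℝ) + 1) := by ring
    · have h := (tendsto_const_div_atTop_nhds_zero_nat K).comp
        (Filter.tendsto_add_atTop_nat 1)
      apply h.congr
      intro n
      simp only [Function.comp_apply]
      push_cast
      ring
  have hfnonneg : ∀ t : ℕ, 0 ≤ f t := by
    intro t
    simp only [hf]
    split_ifs with ht
    · rw [stepWeight]
      exact mul_nonneg (by rw [stepAlpha]; positivity) (hPnonneg t)
    · exact le_refl 0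
  rw [hasSum_iff_tendsto_nat_of_nonneg hfnonneg]
  have hlim : Filter.Tendsto (fun n => g i - g n) Filter.atTop (nhds (g i - 0)) :=
    Filter.Tendsto.sub tendsto_const_nhds hgto
  rw [sub_zero, hgi] at hlim
  apply hlim.congr'
  filter_upwards [Filter.eventually_atTop.mpr ⟨i, fun n hn => hn⟩] with n hn
  rw [hsum n hn, hgi]
end
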